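/- Let f₂(S) = C(|S|,2) be the graphical valuation counting pairs in S, on m items. Every set function f of supermodular degree d approximates f₂ within ratio no better than m/(d+1) − 1. In particular the supermodular degree of f₂ is Ω(m). -/

import Mathlib

open Finset

/-- `j'` supermodularly depends on `j`: there is a set `S` such that the marginal value
of `j` given `S ∪ {j'}` exceeds the marginal value of `j` given `S`. -/
def SupDep {ι : Type*} [DecidableEq ι] (f : Finset ι → ℝ) (j j' : ι) : Prop :=
  ∃ S : Finset ι,
    f (insert j S) - f S < f (insert j (insert j' S)) - f (insert j' S)

/-!
Supermodular dependency is symmetric, so it is the adjacency of a graph of maximum degree `d`,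
which greedily yields an independent set `T` with `m ≤ (d + 1) |T|`. On `T` the function is
submodular along every pair, so the marginals at the top satisfy
`∑_{a ∈ T} (f T - f (T \ {a})) ≤ f T`, i.e. `(|T| - 1) f T ≤ ∑_a f (T \ {a})`. Descending to pairs,
where `f ≤ ρ₂ f₂ = ρ₂`, gives `2 f T ≤ |T| ρ₂`, while `f T ≥ ρ₁ |T| (|T| - 1) / 2`; hence
`|T| - 1 ≤ ρ₂ / ρ₁`.
-/

theorem SimpleGraph.exists_isIndepSet_subset_card_le_mul {V : Type*} [DecidableEq V]
    (G : SimpleGraph V) [DecidableRel G.Adj] (d : ℕ) (R : Finset V)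
    (hdeg : ∀ v ∈ R, #{w ∈ R | G.Adj v w} ≤ d) :
    ∃ T ⊆ R, G.IsIndepSet T ∧ #R ≤ (d + 1) * #T := by
  induction R using Finset.strongInduction with
  | H R ih =>
  rcases R.eq_empty_or_nonempty with rfl | ⟨v, hv⟩
  · exact ⟨∅, Subset.rfl, by simp, by simp⟩
  set N := {w ∈ R | G.Adj v w}
  have hsub : R \ insert v N ⊂ R := (ssubset_iff_of_subset sdiff_subset).2 ⟨v, hv, by simp⟩
  obtain ⟨T, hTR, hT, hcard⟩ := ih _ hsub fun w hw =>
    (card_le_card (filter_subset_filter _ sdiff_subset)).trans (hdeg w (sdiff_subset hw))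
  have hTN : ∀ w ∈ T, w ∉ insert v N := fun w hw => (mem_sdiff.1 (hTR hw)).2
  refine ⟨insert v T, insert_subset hv (hTR.trans sdiff_subset), ?_, ?_⟩
  · rw [coe_insert]
    refine hT.insert fun w hw _ => ?_
    have hnadj : ¬ G.Adj v w := fun h =>
      hTN w hw (mem_insert_of_mem (mem_filter.2 ⟨sdiff_subset (hTR hw), h⟩))
    exact ⟨hnadj, fun h => hnadj h.symm⟩
  · have hvT : v ∉ T := fun h => hTN v h (mem_insert_self _ _)
    calc #R ≤ #(R \ insert v N) + #(insert v N) := card_le_card_sdiff_add_card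
      _ ≤ (d + 1) * #T + (d + 1) :=
        add_le_add hcard ((card_insert_le _ _).trans (Nat.succ_le_succ (hdeg v hv)))
      _ = (d + 1) * #(insert v T) := by rw [card_insert_of_notMem hvT]; ring

section SupDep

variable {ι : Type*} [DecidableEq ι] {f : Finset ι → ℝ}

theorem SupDep.symm {a b : ι} (h : SupDep f a b) : SupDep f b a := by
  obtain ⟨S, hS⟩ := h
  exact ⟨S, by rw [insert_comm]; linarith⟩

theorem not_supDep_iff {a b : ι} :
    ¬ SupDep f a b ↔ ∀ S, f (insert a (insert b S)) - f (insert b S) ≤ f (insert a S) - f S := by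
  simp only [SupDep, not_exists, not_lt]

variable (f) in
def supDepGraph : SimpleGraph ι where
  Adj a b := a ≠ b ∧ SupDep f a b
  symm := ⟨fun _ _ h => ⟨h.1.symm, h.2.symm⟩⟩
  loopless := ⟨fun _ h => h.1 rfl⟩

theorem card_filter_supDepGraph_adj [Fintype ι] [DecidableRel (supDepGraph f).Adj] (j : ι) :
    #{j' | (supDepGraph f).Adj j j'} = ({j' | j' ≠ j ∧ SupDep f j j'} : Set ι).ncard := by
  rw [← Set.ncard_coe_finset]
  congr 1
  ext j'
  rw [mem_coe, mem_filter_univ]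
  exact and_congr_left' ne_comm

theorem sum_sub_erase_le_of_pairwise_not_supDep {T : Finset ι}
    (hT : (T : Set ι).Pairwise fun a b => ¬ SupDep f a b) :
    ∑ a ∈ T, (f T - f (T.erase a)) ≤ f T - f ∅ := by
  induction T using Finset.induction_on with
  | empty => simp
  | insert x T hx ih =>
    rw [coe_insert] at hT
    have hmarg : ∀ b ∈ T, f (insert x T) - f ((insert x T).erase b) ≤ f T - f (T.erase b) := by
      intro b hb
      have hbx : b ≠ x := ne_of_mem_of_not_mem hb hx
      have h := not_supDep_iff.1
        (hT (Set.mem_insert_of_mem _ hb) (Set.mem_insert _ _) hbx) (T.erase b)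
      rwa [insert_comm, insert_erase hb, ← erase_insert_of_ne hbx.symm] at h
    have hsum := sum_le_sum hmarg
    have hT' := ih (hT.mono (Set.subset_insert _ _))
    rw [sum_insert hx, erase_insert hx]
    linarith

theorem two_mul_le_card_mul_of_pairwise_not_supDep (h0 : f ∅ = 0) {ρ : ℝ} {T : Finset ι}
    (hT : (T : Set ι).Pairwise fun a b => ¬ SupDep f a b)
    (hpair : ∀ a ∈ T, ∀ b ∈ T, a ≠ b → f {a, b} ≤ ρ) (hcard : 2 ≤ #T) :
    2 * f T ≤ #T * ρ := by
  obtain ⟨n, hn⟩ : ∃ n, #T = n := ⟨_, rfl⟩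
  rw [hn] at hcard ⊢
  induction n, hcard using Nat.le_induction generalizing T with
  | base =>
    obtain ⟨a, b, hab, rfl⟩ := card_eq_two.1 hn
    have := hpair a (by simp) b (by simp) hab
    push_cast
    linarith
  | succ n hn2 ih =>
    have herase : ∀ a ∈ T, 2 * f (T.erase a) ≤ n * ρ := fun a ha =>
      ih (hT.mono (by simp)) (fun b hb c hc => hpair b (mem_of_mem_erase hb) c
        (mem_of_mem_erase hc)) (by rw [card_erase_of_mem ha, hn]; rfl)
    have hsum := sum_le_sum herase
    have htop := sum_sub_erase_le_of_pairwise_not_supDep hT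
    rw [← mul_sum, sum_const, hn, nsmul_eq_mul] at hsum
    rw [sum_sub_distrib, sum_const, hn, nsmul_eq_mul, h0] at htop
    have hn0 : (0 : ℝ) < n := by exact_mod_cast (by omega : 0 < n)
    push_cast at hsum htop ⊢
    nlinarith

end SupDep

theorem supermodular_degree_cannot_approximate_pairs_general {ι : Type*} [Fintype ι]
    [DecidableEq ι] (d : ℕ) (f : Finset ι → ℝ) (h0 : f ∅ = 0)
    (hdeg : ∀ j : ι, ({j' | j' ≠ j ∧ SupDep f j j'} : Set ι).ncard ≤ d)
    (f₂ : Finset ι → ℝ) (hf₂ : ∀ S : Finset ι, f₂ S = (S.card.choose 2 : ℝ))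
    (ρ₁ ρ₂ : ℝ) (hρ₁ : 0 < ρ₁) (hρ : ρ₁ ≤ ρ₂)
    (hratio : ∀ S : Finset ι, 0 < f₂ S → ρ₁ ≤ f S / f₂ S ∧ f S / f₂ S ≤ ρ₂) :
    (Fintype.card ι : ℝ) / (d + 1) - 1 ≤ ρ₂ / ρ₁ := by
  classical
  obtain ⟨T, -, hT, hcard⟩ := (supDepGraph f).exists_isIndepSet_subset_card_le_mul d univ
    fun j _ => (card_filter_supDepGraph_adj j).trans_le (hdeg j)
  have hTf : (T : Set ι).Pairwise fun a b => ¬ SupDep f a b :=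
    fun a ha b hb hab h => hT ha hb hab ⟨hab, h⟩
  have hm : (Fintype.card ι : ℝ) / (d + 1) ≤ #T := by
    rw [div_le_iff₀ (by positivity)]
    exact_mod_cast (card_univ (α := ι) ▸ hcard).trans_eq (mul_comm _ _)
  suffices (#T : ℝ) - 1 ≤ ρ₂ / ρ₁ by linarith
  rcases lt_or_ge #T 2 with ht | ht
  · have h1 : 1 ≤ ρ₂ / ρ₁ := (one_le_div hρ₁).2 hρ
    have h2 : (#T : ℝ) ≤ 1 := by exact_mod_cast Nat.le_of_lt_succ ht
    linarith
  have hpair : ∀ a ∈ T, ∀ b ∈ T, a ≠ b → f {a, b} ≤ ρ₂ := fun a _ b _ hab => by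
    have h := (hratio {a, b} (by simp [hf₂, card_pair hab])).2
    rwa [hf₂, card_pair hab, Nat.choose_self, Nat.cast_one, div_one] at h
  have hupper := two_mul_le_card_mul_of_pairwise_not_supDep h0 hTf hpair ht
  have hf₂T : f₂ T = #T * (#T - 1 : ℝ) / 2 := by rw [hf₂, Nat.cast_choose_two]
  have ht' : (2 : ℝ) ≤ #T := by exact_mod_cast ht
  have hpos : 0 < f₂ T := by rw [hf₂T]; nlinarith
  have hlower := (le_div_iff₀ hpos).1 (hratio T hpos).1
  rw [hf₂T] at hlower
  rw [le_div_iff₀ hρ₁]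
  nlinarith

/-- Every normalized monotone set function of supermodular degree `d` approximates
`f₂ S = C(|S|,2)` within a ratio no better than `m/(d+1) − 1`. -/
theorem supermodular_degree_cannot_approximate_pairs {ι : Type*} [Fintype ι]
    [DecidableEq ι] (d : ℕ) (f : Finset ι → ℝ) (h0 : f ∅ = 0)
    (hmono : ∀ S T : Finset ι, S ⊆ T → f S ≤ f T)
    (hdeg : ∀ j : ι, ({j' | j' ≠ j ∧ SupDep f j j'} : Set ι).ncard ≤ d)
    (f₂ : Finset ι → ℝ) (hf₂ : ∀ S : Finset ι, f₂ S = (S.card.choose 2 : ℝ))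
    (ρ₁ ρ₂ : ℝ) (hρ₁ : 0 < ρ₁) (hρ : ρ₁ ≤ ρ₂)
    (hratio : ∀ S : Finset ι, 0 < f₂ S → ρ₁ ≤ f S / f₂ S ∧ f S / f₂ S ≤ ρ₂) :
    (Fintype.card ι : ℝ) / (d + 1) - 1 ≤ ρ₂ / ρ₁ :=
  supermodular_degree_cannot_approximate_pairs_general d f h0 hdeg f₂ hf₂ ρ₁ ρ₂ hρ₁ hρ hratio
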